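/- (Hales' inequality) For every pair of finite simple graphs G and H, σ(G ⊠ H) ≥ α*(G) · σ(H), where σ denotes the clique covering number. -/

import Mathlib

/-!
Take an optimal clique cover `D₁, …, Dₙ` of `G ⊠ H`. The projection of each `Dᵢ` to `V` is a
clique of `G`, and for each vertex `v` of `G` the fibres over `v` of the `Dᵢ` meeting the column
`{v} × W` form a clique cover of `H`, so every `v` lies in at least `σ(H)` of the projected cliques.
Weighting by any fractional packing `t` of `G` and double counting gives
`(∑ t) · σ(H) ≤ ∑ᵢ ∑_{v ∈ π(Dᵢ)} t v ≤ n`.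
-/

open Finset

namespace SimpleGraph

variable {V W : Type*}

/-- The strong graph product. -/
def strongProd (G : SimpleGraph V) (H : SimpleGraph W) : SimpleGraph (V × W) where
  Adj x y := x ≠ y ∧ (x.1 = y.1 ∨ G.Adj x.1 y.1) ∧ (x.2 = y.2 ∨ H.Adj x.2 y.2)
  symm := ⟨by
    rintro x y ⟨hne, h1, h2⟩
    exact ⟨hne.symm, h1.imp Eq.symm (fun h => G.adj_symm h), h2.imp Eq.symm (fun h => H.adj_symm h)⟩⟩
  loopless := ⟨by rintro x ⟨hne, -, -⟩; exact hne rfl⟩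

/-- The disjunctive graph product. -/
def disjProd (G : SimpleGraph V) (H : SimpleGraph W) : SimpleGraph (V × W) where
  Adj x y := G.Adj x.1 y.1 ∨ H.Adj x.2 y.2
  symm := ⟨by rintro _ _ h; exact h.imp (fun h => G.adj_symm h) (fun h => H.adj_symm h)⟩
  loopless := ⟨by rintro x h; exact h.elim (fun h => G.irrefl h) (fun h => H.irrefl h)⟩

/-- A finite set of vertices is independent if no two of its members are adjacent. -/
def IsIndep (G : SimpleGraph V) (s : Finset V) : Prop :=
  ∀ ⦃v⦄, v ∈ s → ∀ ⦃w⦄, w ∈ s → ¬ G.Adj v w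

/-- The independence number. -/
noncomputable def alpha (G : SimpleGraph V) [Fintype V] : ℕ :=
  sSup {n | ∃ s : Finset V, G.IsIndep s ∧ s.card = n}

/-- The fractional packing number. -/
noncomputable def alphaStar (G : SimpleGraph V) [Fintype V] : ℝ :=
  sSup {x | ∃ t : V → ℝ, (∀ v, 0 ≤ t v) ∧
    (∀ C : Finset V, G.IsClique (C : Set V) → ∑ v ∈ C, t v ≤ 1) ∧ x = ∑ v, t v}

/-- The Lovász number. -/
noncomputable def lovTheta (G : SimpleGraph V) [Fintype V] : ℝ :=
  sSup {x | ∃ B : Matrix V V ℝ, B.PosSemidef ∧ B.trace = 1 ∧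
    (∀ v w, G.Adj v w → B v w = 0) ∧ x = ∑ v, ∑ w, B v w}

/-- Schrijver's variant of the Lovász number. -/
noncomputable def thetaMinus (G : SimpleGraph V) [Fintype V] : ℝ :=
  sSup {x | ∃ B : Matrix V V ℝ, B.PosSemidef ∧ B.trace = 1 ∧ (∀ v w, 0 ≤ B v w) ∧
    (∀ v w, G.Adj v w → B v w = 0) ∧ x = ∑ v, ∑ w, B v w}

/-- Szegedy's variant of the Lovász number. -/
noncomputable def thetaPlus (G : SimpleGraph V) [Fintype V] : ℝ :=
  sSup {x | ∃ B : Matrix V V ℝ, B.PosSemidef ∧ B.trace = 1 ∧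
    (∀ v w, G.Adj v w → B v w ≤ 0) ∧ x = ∑ v, ∑ w, B v w}

/-- The clique covering number. -/
noncomputable def cliqueCoverNum (G : SimpleGraph V) [Fintype V] : ℕ :=
  sInf {n | ∃ C : Fin n → Finset V, (∀ i, G.IsClique (C i : Set V)) ∧ ∀ v, ∃ i, v ∈ C i}

/-- The blow-up of a graph along integer vertex weights. -/
def blup (G : SimpleGraph V) (p : V → ℕ) : SimpleGraph (Σ v, Fin (p v)) where
  Adj x y := G.Adj x.1 y.1
  symm := ⟨by rintro _ _ h; exact G.adj_symm h⟩
  loopless := ⟨by rintro x h; exact G.irrefl h⟩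

/-- The weighted independence number (integer weights). -/
noncomputable def alphaWNat (G : SimpleGraph V) [Fintype V] (p : V → ℕ) : ℕ :=
  sSup {n | ∃ s : Finset V, G.IsIndep s ∧ n = ∑ v ∈ s, p v}

/-- The weighted independence number (real weights). -/
noncomputable def alphaW (G : SimpleGraph V) [Fintype V] (p : V → ℝ) : ℝ :=
  sSup {x | ∃ s : Finset V, G.IsIndep s ∧ x = ∑ v ∈ s, p v}

end SimpleGraph

theorem Finset.sum_mul_le_card_of_le_card_filter_mem {ι α : Type*} [Fintype ι] [Fintype α]
    [DecidableEq α] (Q : ι → Finset α) (t : α → ℝ) (m : ℕ) (ht : ∀ a, 0 ≤ t a)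
    (hQ : ∀ i, ∑ a ∈ Q i, t a ≤ 1) (hmult : ∀ a, m ≤ #{i | a ∈ Q i}) :
    (∑ a, t a) * m ≤ Fintype.card ι := by
  calc (∑ a, t a) * m = ∑ a, t a * m := Finset.sum_mul ..
    _ ≤ ∑ a, t a * #{i | a ∈ Q i} := by
        gcongr with a
        exacts [ht a, hmult a]
    _ = ∑ i, ∑ a ∈ Q i, t a := by
        simp_rw [mul_comm (t _), ← nsmul_eq_mul, ← Finset.sum_const]
        exact Finset.sum_comm' (by simp)
    _ ≤ ∑ _i : ι, (1 : ℝ) := Finset.sum_le_sum fun i _ => hQ i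
    _ = Fintype.card ι := by simp

namespace SimpleGraph

variable {V W : Type*}

theorem cliqueCoverNum_le_card [Fintype V] (G : SimpleGraph V) {ι : Type*} [Fintype ι]
    (C : ι → Finset V) (hC : ∀ i, G.IsClique (C i : Set V)) (hcov : ∀ v, ∃ i, v ∈ C i) :
    G.cliqueCoverNum ≤ Fintype.card ι := by
  classical
  let e := Fintype.equivFin ι
  exact Nat.sInf_le ⟨C ∘ e.symm, fun i => hC _, fun v => (hcov v).elim fun i hi => ⟨e i, by simpa⟩⟩

theorem exists_cliqueCover [Fintype V] (G : SimpleGraph V) :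
    ∃ C : Fin G.cliqueCoverNum → Finset V,
      (∀ i, G.IsClique (C i : Set V)) ∧ ∀ v, ∃ i, v ∈ C i := by
  classical
  let e := Fintype.equivFin V
  exact Nat.sInf_mem (s := {n | ∃ C : Fin n → Finset V,
      (∀ i, G.IsClique (C i : Set V)) ∧ ∀ v, ∃ i, v ∈ C i})
    ⟨Fintype.card V, fun i => {e.symm i}, fun i => by simp, fun v => ⟨e v, by simp⟩⟩

section StrongProd

variable {G : SimpleGraph V} {H : SimpleGraph W} {s : Set (V × W)}

theorem IsClique.image_fst_of_strongProd (hs : (G.strongProd H).IsClique s) :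
    G.IsClique (Prod.fst '' s) := by
  rintro _ ⟨p, hp, rfl⟩ _ ⟨q, hq, rfl⟩ hne
  exact ((hs hp hq fun h => hne (congrArg Prod.fst h)).2.1).resolve_left hne

theorem IsClique.preimage_mk_of_strongProd (hs : (G.strongProd H).IsClique s) (v : V) :
    H.IsClique (Prod.mk v ⁻¹' s) := by
  intro w hw w' hw' hne
  exact ((hs hw hw' fun h => hne (congrArg Prod.snd h)).2.2).resolve_left hne

theorem cliqueCoverNum_le_card_filter_mem_image_fst [Fintype W] [DecidableEq V]
    {ι : Type*} [Fintype ι] (D : ι → Finset (V × W))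
    (hD : ∀ i, (G.strongProd H).IsClique (D i : Set (V × W))) (hcov : ∀ p, ∃ i, p ∈ D i)
    (v : V) : H.cliqueCoverNum ≤ #{i | v ∈ (D i).image Prod.fst} := by
  rw [← Fintype.card_subtype]
  refine H.cliqueCoverNum_le_card
    (fun i => (D i.1).preimage (Prod.mk v) (Prod.mk_right_injective v).injOn)
    (fun i => by simpa using (hD i.1).preimage_mk_of_strongProd v) fun w => ?_
  obtain ⟨i, hi⟩ := hcov (v, w)
  exact ⟨⟨i, Finset.mem_image_of_mem Prod.fst hi⟩, by simpa using hi⟩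

end StrongProd

theorem alphaStar_mul_le [Fintype V] (G : SimpleGraph V) {m c : ℝ} (hm : 0 ≤ m) (hc : 0 ≤ c)
    (h : ∀ t : V → ℝ, (∀ v, 0 ≤ t v) →
      (∀ C : Finset V, G.IsClique (C : Set V) → ∑ v ∈ C, t v ≤ 1) → (∑ v, t v) * m ≤ c) :
    G.alphaStar * m ≤ c := by
  rcases hm.eq_or_lt with rfl | hm
  · simpa using hc
  rw [← le_div_iff₀ hm]
  refine Real.sSup_le ?_ (div_nonneg hc hm.le)
  rintro _ ⟨t, ht, htC, rfl⟩
  exact (le_div_iff₀ hm).mpr (h t ht htC)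

end SimpleGraph

open SimpleGraph
open scoped RealInnerProductSpace

theorem hales_inequality {V W : Type*} [Fintype V] [Fintype W]
    (G : SimpleGraph V) (H : SimpleGraph W) :
    G.alphaStar * ((H.cliqueCoverNum : ℝ)) ≤ ((G.strongProd H).cliqueCoverNum : ℝ) := by
  classical
  obtain ⟨D, hD, hcov⟩ := (G.strongProd H).exists_cliqueCover
  refine G.alphaStar_mul_le (Nat.cast_nonneg _) (Nat.cast_nonneg _) fun t ht htC => ?_
  simpa only [Fintype.card_fin] using
    Finset.sum_mul_le_card_of_le_card_filter_mem (fun i => (D i).image Prod.fst) t _ ht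
      (fun i => htC _ (by simpa using (hD i).image_fst_of_strongProd))
      (cliqueCoverNum_le_card_filter_mem_image_fst D hD hcov)
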